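/- arXiv:1610.03577 — 2 statements merged into one kernel-verified Lean document; each statement's English description precedes it below -/
import Mathlib

section
/- If $\phi : \mathbb{R} \to \mathbb{R}$ is $\alpha$-Lipschitz, then for any class $F$ of real-valued functions and sample $S$, the empirical Rademacher complexity of $\phi \circ F = \{\phi \circ f : f \in F\}$ is at most $\alpha$ times that of $F$: $\mathfrak{R}(\phi \circ F \circ S) \le \alpha\, \mathfrak{R}(F \circ S)$. -/
open scoped BigOperators


lemma key_step {ι : Type*} [Nonempty ι] (g h : ι → ℝ) (φ : ℝ → ℝ) (α : ℝ)
    (hφ : ∀ a b, |φ a - φ b| ≤ α * |a - b|)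
    (b3 : BddAbove (Set.range fun j => g j + α * h j))
    (b4 : BddAbove (Set.range fun j => g j - α * h j)) :
    (⨆ j, g j + φ (h j)) + (⨆ j, g j - φ (h j))
      ≤ (⨆ j, g j + α * h j) + (⨆ j, g j - α * h j) := by
  rw [← le_sub_iff_add_le]
  refine ciSup_le fun j1 => ?_
  rw [le_sub_iff_add_le, add_comm, ← le_sub_iff_add_le]
  refine ciSup_le fun j2 => ?_
  rw [le_sub_iff_add_le]
  rcases le_total (h j2) (h j1) with hc | hc
  · have h1 := le_trans (le_abs_self _) (hφ (h j1) (h j2))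
    rw [abs_of_nonneg (sub_nonneg.2 hc)] at h1
    have := le_ciSup b3 j1
    have := le_ciSup b4 j2
    linarith [mul_sub α (h j1) (h j2)]
  · have h1 := le_trans (le_abs_self _) (hφ (h j1) (h j2))
    rw [abs_of_nonpos (sub_nonpos.2 hc)] at h1
    have := le_ciSup b3 j2
    have := le_ciSup b4 j1
    linarith [mul_neg α (h j1 - h j2), mul_sub α (h j1) (h j2)]


lemma mixedEq {ι : Type*} {N : ℕ} (f : ι → Fin N → ℝ) (φ : ℝ → ℝ) (α : ℝ)
    (T : Finset (Fin N)) (σ : Fin N → Bool) (j : ι) :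
    ∑ i, (if σ i then (1:ℝ) else -1) * (if i ∈ T then φ (f j i) else α * f j i)
    = (1/2) * ((∑ i, (if σ i then (1:ℝ) else -1) * φ (f j i))
        + ∑ i, (if (if i ∈ T then σ i else !σ i) then (1:ℝ) else -1) * φ (f j i))
      + (α/2) * ((∑ i, (if σ i then (1:ℝ) else -1) * f j i)
        + ∑ i, (if (if i ∈ T then !σ i else σ i) then (1:ℝ) else -1) * f j i) := by
  rw [← Finset.sum_add_distrib, ← Finset.sum_add_distrib, Finset.mul_sum, Finset.mul_sum,
    ← Finset.sum_add_distrib]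
  refine Finset.sum_congr rfl fun i _ => ?_
  by_cases hi : i ∈ T <;> cases hσ : σ i <;> simp [hi, hσ] <;> ring

lemma mixedBdd {ι : Type*} {N : ℕ} (f : ι → Fin N → ℝ) (φ : ℝ → ℝ) (α : ℝ) (hα : 0 ≤ α)
    (hb : ∀ σ : Fin N → Bool, BddAbove (Set.range fun j : ι =>
      ∑ i, (if σ i then (1:ℝ) else -1) * f j i))
    (hbφ : ∀ σ : Fin N → Bool, BddAbove (Set.range fun j : ι =>
      ∑ i, (if σ i then (1:ℝ) else -1) * φ (f j i)))
    (T : Finset (Fin N)) (σ : Fin N → Bool) :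
    BddAbove (Set.range fun j : ι =>
      ∑ i, (if σ i then (1:ℝ) else -1) * (if i ∈ T then φ (f j i) else α * f j i)) := by
  obtain ⟨c1, hc1⟩ := hbφ σ
  obtain ⟨c2, hc2⟩ := hbφ (fun i => if i ∈ T then σ i else !σ i)
  obtain ⟨c3, hc3⟩ := hb σ
  obtain ⟨c4, hc4⟩ := hb (fun i => if i ∈ T then !σ i else σ i)
  refine ⟨(1/2) * (c1 + c2) + (α/2) * (c3 + c4), ?_⟩
  rintro x ⟨j, rfl⟩
  show (∑ i, (if σ i then (1:ℝ) else -1) * (if i ∈ T then φ (f j i) else α * f j i)) ≤ _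
  rw [mixedEq f φ α T σ j]
  have h1 := hc1 (Set.mem_range_self j)
  have h2 := hc2 (Set.mem_range_self j)
  have h3 := hc3 (Set.mem_range_self j)
  have h4 := hc4 (Set.mem_range_self j)
  nlinarith

lemma contraction_step {ι : Type*} [Nonempty ι] {N : ℕ}
    (f : ι → Fin N → ℝ) (φ : ℝ → ℝ) (α : ℝ) (hα : 0 ≤ α)
    (hφ : ∀ a b, |φ a - φ b| ≤ α * |a - b|)
    (B : ∀ (T : Finset (Fin N)) (σ : Fin N → Bool), BddAbove (Set.range fun j : ι =>
      ∑ i, (if σ i then (1:ℝ) else -1) * (if i ∈ T then φ (f j i) else α * f j i)))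
    (T : Finset (Fin N)) (k : Fin N) (hk : k ∈ T) :
    (∑ σ : Fin N → Bool, ⨆ j : ι,
        ∑ i, (if σ i then (1:ℝ) else -1) * (if i ∈ T then φ (f j i) else α * f j i))
    ≤ ∑ σ : Fin N → Bool, ⨆ j : ι,
        ∑ i, (if σ i then (1:ℝ) else -1) * (if i ∈ T.erase k then φ (f j i) else α * f j i) := by
  set T' := T.erase k with hT'def
  set flip : (Fin N → Bool) → (Fin N → Bool) := fun σ => Function.update σ k (!σ k) with hflip
  have hinv : Function.Involutive flip := by
    intro σ; funext i
    by_cases hi : i = k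
    · subst hi; simp [flip, Function.update_self]
    · simp [flip, Function.update_of_ne hi]
  have hsum : ∀ F : (Fin N → Bool) → ℝ, ∑ σ, F (flip σ) = ∑ σ, F σ :=
    fun F => Equiv.sum_comp hinv.toPerm F
  -- canonical decomposition
  set g : (Fin N → Bool) → ι → ℝ := fun σ j => ∑ i ∈ Finset.univ.erase k,
    (if σ i then (1:ℝ) else -1) * (if i ∈ T' then φ (f j i) else α * f j i) with hg
  have hgflip : ∀ σ, g (flip σ) = g σ := by
    intro σ; funext j
    refine Finset.sum_congr rfl fun i hi => ?_
    simp only [hflip, Function.update_of_ne (Finset.mem_erase.mp hi).1]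
  have hflipk : ∀ σ : Fin N → Bool, flip σ k = !σ k := fun σ => Function.update_self k _ σ
  have hT : ∀ (σ : Fin N → Bool) (j : ι),
      (∑ i, (if σ i then (1:ℝ) else -1) * (if i ∈ T then φ (f j i) else α * f j i))
      = g σ j + (if σ k then (1:ℝ) else -1) * φ (f j k) := by
    intro σ j
    rw [← Finset.add_sum_erase _ _ (Finset.mem_univ k), if_pos hk, add_comm]
    congr 1
    refine Finset.sum_congr rfl fun i hi => ?_
    have hik : i ≠ k := (Finset.mem_erase.mp hi).1
    have : (if i ∈ T then φ (f j i) else α * f j i) = (if i ∈ T' then φ (f j i) else α * f j i) := by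
      simp [hT'def, Finset.mem_erase, hik]
    rw [this]
  have hT2 : ∀ (σ : Fin N → Bool) (j : ι),
      (∑ i, (if σ i then (1:ℝ) else -1) * (if i ∈ T' then φ (f j i) else α * f j i))
      = g σ j + (if σ k then (1:ℝ) else -1) * (α * f j k) := by
    intro σ j
    rw [← Finset.add_sum_erase _ _ (Finset.mem_univ k),
      if_neg (Finset.notMem_erase k T), add_comm]
  have key : ∀ σ : Fin N → Bool,
      ((⨆ j : ι, ∑ i, (if σ i then (1:ℝ) else -1) * (if i ∈ T then φ (f j i) else α * f j i))
        + ⨆ j : ι, ∑ i, (if flip σ i then (1:ℝ) else -1) * (if i ∈ T then φ (f j i) else α * f j i))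
      ≤ (⨆ j : ι, ∑ i, (if σ i then (1:ℝ) else -1) * (if i ∈ T' then φ (f j i) else α * f j i))
        + ⨆ j : ι, ∑ i, (if flip σ i then (1:ℝ) else -1) * (if i ∈ T' then φ (f j i) else α * f j i) := by
    intro σ
    cases hσk : σ k
    · -- σ k = false : σ has "-", flip σ has "+"
      have e1 : (⨆ j : ι, ∑ i, (if σ i then (1:ℝ) else -1) * (if i ∈ T then φ (f j i) else α * f j i))
          = ⨆ j : ι, g σ j - φ (f j k) := iSup_congr fun j => by rw [hT σ j, hσk]; simp; try ring
      have e2 : (⨆ j : ι, ∑ i, (if flip σ i then (1:ℝ) else -1) * (if i ∈ T then φ (f j i) else α * f j i))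
          = ⨆ j : ι, g σ j + φ (f j k) := iSup_congr fun j => by
            rw [hT (flip σ) j, hgflip σ, hflipk σ, hσk]; simp; try ring
      have e3 : (⨆ j : ι, ∑ i, (if σ i then (1:ℝ) else -1) * (if i ∈ T' then φ (f j i) else α * f j i))
          = ⨆ j : ι, g σ j - α * f j k := iSup_congr fun j => by rw [hT2 σ j, hσk]; simp; try ring
      have e4 : (⨆ j : ι, ∑ i, (if flip σ i then (1:ℝ) else -1) * (if i ∈ T' then φ (f j i) else α * f j i))
          = ⨆ j : ι, g σ j + α * f j k := iSup_congr fun j => by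
            rw [hT2 (flip σ) j, hgflip σ, hflipk σ, hσk]; simp; try ring
      have b3 : BddAbove (Set.range fun j : ι => g σ j + α * f j k) := by
        have := B T' (flip σ)
        rwa [show (fun j : ι => ∑ i, (if flip σ i then (1:ℝ) else -1) * (if i ∈ T' then φ (f j i) else α * f j i))
          = fun j : ι => g σ j + α * f j k from funext fun j => by
            rw [hT2 (flip σ) j, hgflip σ, hflipk σ, hσk]; simp; try ring] at this
      have b4 : BddAbove (Set.range fun j : ι => g σ j - α * f j k) := by
        have := B T' σ
        rwa [show (fun j : ι => ∑ i, (if σ i then (1:ℝ) else -1) * (if i ∈ T' then φ (f j i) else α * f j i))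
          = fun j : ι => g σ j - α * f j k from funext fun j => by rw [hT2 σ j, hσk]; simp; try ring] at this
      rw [e1, e2, e3, e4]
      linarith [key_step (g σ) (fun j => f j k) φ α hφ b3 b4]
    · -- σ k = true
      have e1 : (⨆ j : ι, ∑ i, (if σ i then (1:ℝ) else -1) * (if i ∈ T then φ (f j i) else α * f j i))
          = ⨆ j : ι, g σ j + φ (f j k) := iSup_congr fun j => by rw [hT σ j, hσk]; simp; try ring
      have e2 : (⨆ j : ι, ∑ i, (if flip σ i then (1:ℝ) else -1) * (if i ∈ T then φ (f j i) else α * f j i))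
          = ⨆ j : ι, g σ j - φ (f j k) := iSup_congr fun j => by
            rw [hT (flip σ) j, hgflip σ, hflipk σ, hσk]; simp; try ring
      have e3 : (⨆ j : ι, ∑ i, (if σ i then (1:ℝ) else -1) * (if i ∈ T' then φ (f j i) else α * f j i))
          = ⨆ j : ι, g σ j + α * f j k := iSup_congr fun j => by rw [hT2 σ j, hσk]; simp; try ring
      have e4 : (⨆ j : ι, ∑ i, (if flip σ i then (1:ℝ) else -1) * (if i ∈ T' then φ (f j i) else α * f j i))
          = ⨆ j : ι, g σ j - α * f j k := iSup_congr fun j => by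
            rw [hT2 (flip σ) j, hgflip σ, hflipk σ, hσk]; simp; try ring
      have b3 : BddAbove (Set.range fun j : ι => g σ j + α * f j k) := by
        have := B T' σ
        rwa [show (fun j : ι => ∑ i, (if σ i then (1:ℝ) else -1) * (if i ∈ T' then φ (f j i) else α * f j i))
          = fun j : ι => g σ j + α * f j k from funext fun j => by rw [hT2 σ j, hσk]; simp; try ring] at this
      have b4 : BddAbove (Set.range fun j : ι => g σ j - α * f j k) := by
        have := B T' (flip σ)
        rwa [show (fun j : ι => ∑ i, (if flip σ i then (1:ℝ) else -1) * (if i ∈ T' then φ (f j i) else α * f j i))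
          = fun j : ι => g σ j - α * f j k from funext fun j => by
            rw [hT2 (flip σ) j, hgflip σ, hflipk σ, hσk]; simp; try ring] at this
      rw [e1, e2, e3, e4]
      exact key_step (g σ) (fun j => f j k) φ α hφ b3 b4
  -- assemble
  set F : (Fin N → Bool) → ℝ := fun σ => ⨆ j : ι,
    ∑ i, (if σ i then (1:ℝ) else -1) * (if i ∈ T then φ (f j i) else α * f j i) with hF
  set F' : (Fin N → Bool) → ℝ := fun σ => ⨆ j : ι,
    ∑ i, (if σ i then (1:ℝ) else -1) * (if i ∈ T' then φ (f j i) else α * f j i) with hF'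
  have : ∑ σ, F σ = (∑ σ, (F σ + F (flip σ))) / 2 := by
    rw [Finset.sum_add_distrib, hsum F]; ring
  rw [this]
  have : ∑ σ, F' σ = (∑ σ, (F' σ + F' (flip σ))) / 2 := by
    rw [Finset.sum_add_distrib, hsum F']; ring
  rw [this]
  have hkey := Finset.sum_le_sum (fun (σ : Fin N → Bool) (_ : σ ∈ Finset.univ) => key σ)
  linarith


/-- Contraction lemma: composing a class with an `α`-Lipschitz scalar function
multiplies the empirical Rademacher complexity by at most `α`. The class `F` is
encoded by an index type `ι`, with `f ι i` the value of the function indexed by `ι`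
on the `i`-th sample point. -/
theorem stmt5 {ι : Type*} [Nonempty ι] (N : ℕ) (hN : 0 < N)
    (f : ι → Fin N → ℝ) (φ : ℝ → ℝ) (α : ℝ)
    (hφ : ∀ a b : ℝ, |φ a - φ b| ≤ α * |a - b|)
    (hb : ∀ σ : Fin N → Bool, BddAbove (Set.range fun j : ι =>
      ∑ i, (if σ i then (1:ℝ) else -1) * f j i))
    (hbφ : ∀ σ : Fin N → Bool, BddAbove (Set.range fun j : ι =>
      ∑ i, (if σ i then (1:ℝ) else -1) * φ (f j i))) :
    (1 / N : ℝ) * ((∑ σ : Fin N → Bool,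
        ⨆ j : ι, ∑ i, (if σ i then (1:ℝ) else -1) * φ (f j i)) / 2 ^ N)
      ≤ α * ((1 / N : ℝ) * ((∑ σ : Fin N → Bool,
        ⨆ j : ι, ∑ i, (if σ i then (1:ℝ) else -1) * f j i) / 2 ^ N)) := by
  have hα : 0 ≤ α := by
    have h := hφ 0 1
    norm_num at h
    linarith [abs_nonneg (φ 0 - φ 1)]
  have B := mixedBdd f φ α hα hb hbφ
  have main : ∀ T : Finset (Fin N),
      (∑ σ : Fin N → Bool, ⨆ j : ι,
        ∑ i, (if σ i then (1:ℝ) else -1) * (if i ∈ T then φ (f j i) else α * f j i))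
      ≤ ∑ σ : Fin N → Bool, ⨆ j : ι,
        ∑ i, (if σ i then (1:ℝ) else -1) * (if i ∈ (∅ : Finset (Fin N)) then φ (f j i) else α * f j i) := by
    intro T
    refine Finset.induction_on T le_rfl (fun a s ha ih => le_trans ?_ ih)
    have := contraction_step f φ α hα hφ B (insert a s) a (Finset.mem_insert_self a s)
    rwa [Finset.erase_insert ha] at this
  have h1 := main Finset.univ
  have eL : (∑ σ : Fin N → Bool, ⨆ j : ι,
        ∑ i, (if σ i then (1:ℝ) else -1) * (if i ∈ (Finset.univ : Finset (Fin N)) then φ (f j i) else α * f j i))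
      = ∑ σ : Fin N → Bool, ⨆ j : ι, ∑ i, (if σ i then (1:ℝ) else -1) * φ (f j i) := by
    simp
  have eR : (∑ σ : Fin N → Bool, ⨆ j : ι,
        ∑ i, (if σ i then (1:ℝ) else -1) * (if i ∈ (∅ : Finset (Fin N)) then φ (f j i) else α * f j i))
      = α * ∑ σ : Fin N → Bool, ⨆ j : ι, ∑ i, (if σ i then (1:ℝ) else -1) * f j i := by
    rw [Finset.mul_sum]
    refine Finset.sum_congr rfl fun σ _ => ?_
    rw [Real.mul_iSup_of_nonneg hα]
    refine iSup_congr fun j => ?_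
    rw [Finset.mul_sum]
    refine Finset.sum_congr rfl fun i _ => ?_
    simp
    try ring
  rw [eL, eR] at h1
  have h2N : (0:ℝ) < 2 ^ N := by positivity
  have hNn : (0:ℝ) ≤ 1 / (N:ℝ) := by positivity
  calc (1 / N : ℝ) * ((∑ σ : Fin N → Bool,
        ⨆ j : ι, ∑ i, (if σ i then (1:ℝ) else -1) * φ (f j i)) / 2 ^ N)
      ≤ (1 / N : ℝ) * ((α * ∑ σ : Fin N → Bool,
        ⨆ j : ι, ∑ i, (if σ i then (1:ℝ) else -1) * f j i) / 2 ^ N) := by gcongr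
    _ = α * ((1 / N : ℝ) * ((∑ σ : Fin N → Bool,
        ⨆ j : ι, ∑ i, (if σ i then (1:ℝ) else -1) * f j i) / 2 ^ N)) := by ring
end

section
/- Let $f : U \times V \to \mathbb{R}$ be continuous with $V$ compact, and suppose for each $u$ the maximizer $\hat v(u)$ of $v \mapsto f(u,v)$ is unique, and $f$ has a continuous partial derivative $\nabla_u f$. Then $\Phi(u) = \max_{v \in V} f(u,v)$ is directionally differentiable at every $u$ with $D_y \Phi(u) = \langle \nabla_u f(u, \hat v(u)), y \rangle$ for every direction $y$ (Danskin's theorem, singleton case). -/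
open scoped RealInnerProductSpace Topology

/-!
Since `Φ x = f x (v̂ x)`, the increment `Φ (u + t • y) - Φ u` is squeezed between
`f (u + t • y) (v̂ u) - f u (v̂ u)` and `f (u + t • y) (v̂ (u + t • y)) - f u (v̂ (u + t • y))`.
Compactness of `V` and uniqueness of the maximizer make `v̂` continuous, so both maximizers tend
to `v̂ u`; the mean value inequality, with `∇ᵤ f` continuous jointly in `(u, v)`, then shows that
both difference quotients tend to `⟪∇ᵤ f (u, v̂ u), y⟫`.
-/

open Filter Set Asymptotics

section Argmax

variable {X Y : Type*} [TopologicalSpace X] [TopologicalSpace Y] {U : Set X} {V : Set Y}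
  {f : X → Y → ℝ} {g : X → Y}

theorem le_of_mapClusterPt_argmax (hf : ContinuousOn (fun p : X × Y => f p.1 p.2) (U ×ˢ V))
    (hg_mem : ∀ x ∈ U, g x ∈ V) (hg_max : ∀ x ∈ U, ∀ v ∈ V, f x v ≤ f x (g x))
    {x : X} (hx : x ∈ U) {w : Y} (hw : w ∈ V) (hcluster : MapClusterPt w (𝓝[U] x) g) :
    f x (g x) ≤ f x w := by
  have hgraph : MapClusterPt (x, w) (𝓝[U] x) fun x' => (x', g x') := by
    rw [((𝓝 x).basis_sets.prod_nhds (𝓝 w).basis_sets).mapClusterPt_iff_frequently]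
    rintro ⟨s, t⟩ ⟨hs, ht⟩
    exact ((mapClusterPt_iff_frequently.1 hcluster t ht).and_eventually
      (mem_nhdsWithin_of_mem_nhds hs)).mono fun _ h => ⟨h.2, h.1⟩
  -- `gap ≥ 0` on the graph of `g`, a closed condition that passes to the cluster point `(x, w)`.
  let gap : X × Y → ℝ := fun p => f p.1 p.2 - f p.1 (g x)
  have hgap : ContinuousWithinAt gap (U ×ˢ V) (x, w) :=
    (hf _ ⟨hx, hw⟩).sub ((hf _ ⟨hx, hg_mem x hx⟩).comp
      (continuousWithinAt_fst.prodMk continuousWithinAt_const) fun p hp => ⟨hp.1, hg_mem x hx⟩)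
  have hgraph_mem : ∀ᶠ x' in 𝓝[U] x, (x', g x') ∈ U ×ˢ V :=
    eventually_mem_nhdsWithin.mono fun x' hx' => ⟨hx', hg_mem x' hx'⟩
  have hcluster_gap : MapClusterPt (gap (x, w)) (𝓝[U] x) (gap ∘ fun x' => (x', g x')) :=
    hgraph.tendsto_comp' (hgap.tendsto.mono_left
      (inf_le_inf_left _ (le_principal_iff.2 (mem_map.2 hgraph_mem))))
  have hgap_nonneg : 0 ≤ gap (x, w) :=
    isClosed_Ici.mem_of_mapClusterPt hcluster_gap <| eventually_mem_nhdsWithin.mono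
      fun x' hx' => sub_nonneg.2 (hg_max x' hx' _ (hg_mem x hx))
  exact sub_nonneg.1 hgap_nonneg

theorem IsCompact.continuousOn_argmax (hV : IsCompact V)
    (hf : ContinuousOn (fun p : X × Y => f p.1 p.2) (U ×ˢ V))
    (hg_mem : ∀ x ∈ U, g x ∈ V) (hg_max : ∀ x ∈ U, ∀ v ∈ V, f x v ≤ f x (g x))
    (hg_unique : ∀ x ∈ U, ∀ v ∈ V, f x v = f x (g x) → v = g x) :
    ContinuousOn g U := fun x hx =>
  hV.tendsto_nhds_of_unique_mapClusterPt (eventually_mem_nhdsWithin.mono hg_mem)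
    fun w hw hcluster => hg_unique x hx w hw <| le_antisymm (hg_max x hx w hw)
      (le_of_mapClusterPt_argmax hf hg_mem hg_max hx hw hcluster)

end Argmax

section ParametricDerivative

variable {E Y : Type*} [NormedAddCommGroup E] [NormedSpace ℝ E] [TopologicalSpace Y]
  {U : Set E} {V : Set Y} {u : E}

section

variable {F : Type*} [NormedAddCommGroup F] [NormedSpace ℝ F] {f : E → Y → F}
  {f' : E → Y → E →L[ℝ] F} {v₀ : Y}

theorem isLittleO_sub_sub_fderiv_of_continuousWithinAt (hU : U ∈ 𝓝 u)
    (hf' : ∀ x ∈ U, ∀ v ∈ V, HasFDerivAt (f · v) (f' x v) x)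
    (hcont : ContinuousWithinAt (fun p : E × Y => f' p.1 p.2) (U ×ˢ V) (u, v₀)) :
    (fun p : E × Y => f (u + p.1) p.2 - f u p.2 - f' u v₀ p.1) =o[𝓝 0 ×ˢ 𝓝[V] v₀] Prod.fst := by
  refine isLittleO_iff.2 fun ε hε => ?_
  have hnear : ∀ᶠ p in 𝓝 u ×ˢ 𝓝[V] v₀, ‖f' p.1 p.2 - f' u v₀‖ ≤ ε := by
    rw [← nhdsWithin_eq_nhds.2 hU, ← nhdsWithin_prod_eq]
    exact (hcont.eventually (Metric.closedBall_mem_nhds _ hε)).mono fun p hp => mem_closedBall_iff_norm.1 hp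
  obtain ⟨near_u, hnear_u, near_v₀, hnear_v₀, hbound⟩ := eventually_prod_iff.1 hnear
  obtain ⟨δ, hδ, hball⟩ := Metric.mem_nhds_iff.1 (inter_mem hnear_u hU)
  filter_upwards [prod_mem_prod (Metric.ball_mem_nhds (0 : E) hδ)
    (hnear_v₀.and self_mem_nhdsWithin)] with ⟨h, v⟩ ⟨hh, hv, hvV⟩
  have hmem : u + h ∈ Metric.ball u δ := by simpa using hh
  simpa using (convex_ball u δ).norm_image_sub_le_of_norm_hasFDerivWithin_le'
    (fun x hx => (hf' x (hball hx).2 v hvV).hasFDerivWithinAt)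
    (fun x hx => hbound (hball hx).1 hv) (Metric.mem_ball_self hδ) hmem

theorem tendsto_inv_smul_sub_of_continuousWithinAt_fderiv (hU : U ∈ 𝓝 u)
    (hf' : ∀ x ∈ U, ∀ v ∈ V, HasFDerivAt (f · v) (f' x v) x)
    (hcont : ContinuousWithinAt (fun p : E × Y => f' p.1 p.2) (U ×ˢ V) (u, v₀)) (y : E)
    {w : ℝ → Y} (hw : Tendsto w (𝓝[>] 0) (𝓝[V] v₀)) :
    Tendsto (fun t : ℝ => t⁻¹ • (f (u + t • y) (w t) - f u (w t))) (𝓝[>] 0)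
      (𝓝 (f' u v₀ y)) := by
  have hsmul : Tendsto (fun t : ℝ => t • y) (𝓝[>] 0) (𝓝 0) := by
    simpa using ((tendsto_id : Tendsto id (𝓝 (0 : ℝ)) _).smul_const y).mono_left nhdsWithin_le_nhds
  have hO : (fun t : ℝ => t • y) =O[𝓝[>] 0] fun t => t :=
    IsBigO.of_bound ‖y‖ (Eventually.of_forall fun t => by rw [norm_smul, mul_comm])
  have hsmall := ((isLittleO_sub_sub_fderiv_of_continuousWithinAt hU hf' hcont).comp_tendsto
    (hsmul.prodMk hw)).trans_isBigO hO
  have hlim := hsmall.tendsto_inv_smul_nhds_zero.add_const (f' u v₀ y)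
  rw [zero_add] at hlim
  refine hlim.congr' (eventually_mem_nhdsWithin.mono fun t (ht : 0 < t) => ?_)
  simp only [Function.comp_apply, map_smul, smul_sub, inv_smul_smul₀ ht.ne']
  abel

end

theorem tendsto_slope_of_continuousWithinAt_argmax {f : E → Y → ℝ} {f' : E → Y → E →L[ℝ] ℝ}
    {g : E → Y} {Φ : E → ℝ} (hU : U ∈ 𝓝 u)
    (hf' : ∀ x ∈ U, ∀ v ∈ V, HasFDerivAt (f · v) (f' x v) x)
    (hcont : ContinuousWithinAt (fun p : E × Y => f' p.1 p.2) (U ×ˢ V) (u, g u))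
    (hg_mem : ∀ x ∈ U, g x ∈ V) (hg_max : ∀ x ∈ U, ∀ v ∈ V, f x v ≤ f x (g x))
    (hg_cont : ContinuousWithinAt g U u) (hΦ : ∀ x ∈ U, Φ x = f x (g x)) (y : E) :
    Tendsto (fun t : ℝ => (Φ (u + t • y) - Φ u) / t) (𝓝[>] 0) (𝓝 (f' u (g u) y)) := by
  have hu : u ∈ U := mem_of_mem_nhds hU
  have hray : Tendsto (fun t : ℝ => u + t • y) (𝓝[>] 0) (𝓝 u) := by
    simpa using (((tendsto_id : Tendsto id (𝓝 (0 : ℝ)) _).smul_const y).const_add u).mono_left nhdsWithin_le_nhds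
  have hray_mem : ∀ᶠ t in 𝓝[>] (0 : ℝ), u + t • y ∈ U := hray.eventually_mem hU
  have hg_ray : Tendsto (fun t : ℝ => g (u + t • y)) (𝓝[>] 0) (𝓝[V] (g u)) :=
    tendsto_nhdsWithin_iff.2 ⟨hg_cont.tendsto.comp (tendsto_nhdsWithin_iff.2 ⟨hray, hray_mem⟩),
      hray_mem.mono fun t ht => hg_mem _ ht⟩
  have hlower := tendsto_inv_smul_sub_of_continuousWithinAt_fderiv hU hf' hcont y
    (tendsto_nhdsWithin_iff.2 ⟨tendsto_const_nhds, Eventually.of_forall fun _ => hg_mem u hu⟩)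
  have hupper := tendsto_inv_smul_sub_of_continuousWithinAt_fderiv hU hf' hcont y hg_ray
  simp only [smul_eq_mul, inv_mul_eq_div] at hlower hupper
  refine tendsto_of_tendsto_of_tendsto_of_le_of_le' hlower hupper ?_ ?_ <;>
    filter_upwards [hray_mem, eventually_mem_nhdsWithin] with t ht (htpos : 0 < t) <;>
    rw [hΦ _ ht, hΦ u hu] <;> gcongr
  · exact hg_max _ ht _ (hg_mem u hu)
  · exact hg_max u hu _ (hg_mem _ ht)

end ParametricDerivative

theorem stmt17_general {n m : ℕ}
    (Uset : Set (EuclideanSpace ℝ (Fin n))) (hU : IsOpen Uset)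
    (Vset : Set (EuclideanSpace ℝ (Fin m))) (hVc : IsCompact Vset)
    (f : EuclideanSpace ℝ (Fin n) → EuclideanSpace ℝ (Fin m) → ℝ)
    (hf : ContinuousOn (fun p : EuclideanSpace ℝ (Fin n) × EuclideanSpace ℝ (Fin m) =>
      f p.1 p.2) (Uset ×ˢ Vset))
    (G : EuclideanSpace ℝ (Fin n) → EuclideanSpace ℝ (Fin m) → EuclideanSpace ℝ (Fin n))
    (hG : ∀ u ∈ Uset, ∀ v ∈ Vset, HasGradientAt (fun u' => f u' v) (G u v) u)
    (hGcont : ContinuousOn (fun p : EuclideanSpace ℝ (Fin n) × EuclideanSpace ℝ (Fin m) =>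
      G p.1 p.2) (Uset ×ˢ Vset))
    (vhat : EuclideanSpace ℝ (Fin n) → EuclideanSpace ℝ (Fin m))
    (hvhat_mem : ∀ u ∈ Uset, vhat u ∈ Vset)
    (hvhat_max : ∀ u ∈ Uset, ∀ v ∈ Vset, f u v ≤ f u (vhat u))
    (hvhat_unique : ∀ u ∈ Uset, ∀ v ∈ Vset, f u v = f u (vhat u) → v = vhat u)
    (Φ : EuclideanSpace ℝ (Fin n) → ℝ)
    (hΦ : ∀ u, Φ u = sSup ((fun v => f u v) '' Vset)) :
    ∀ u ∈ Uset, ∀ y : EuclideanSpace ℝ (Fin n),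
      Filter.Tendsto (fun t : ℝ => (Φ (u + t • y) - Φ u) / t)
        (𝓝[>] (0 : ℝ)) (𝓝 ⟪G u (vhat u), y⟫) := by
  intro u hu y
  have hΦ_eq : ∀ x ∈ Uset, Φ x = f x (vhat x) := fun x hx =>
    (hΦ x).trans (IsGreatest.csSup_eq ⟨⟨vhat x, hvhat_mem x hx, rfl⟩, by
      rintro _ ⟨v, hv, rfl⟩
      exact hvhat_max x hx v hv⟩)
  exact tendsto_slope_of_continuousWithinAt_argmax (hU.mem_nhds hu)
    (fun x hx v hv => (hG x hx v hv).hasFDerivAt)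
    ((InnerProductSpace.toDual ℝ _).continuous.continuousAt.comp_continuousWithinAt
      (hGcont _ ⟨hu, hvhat_mem u hu⟩))
    hvhat_mem hvhat_max (hVc.continuousOn_argmax hf hvhat_mem hvhat_max hvhat_unique u hu) hΦ_eq y

/-- Danskin's theorem (singleton case): if the maximizer `v̂(u)` of `v ↦ f(u,v)` over
a compact set `V` is unique and `f` has a (jointly continuous) gradient in `u`,
then `Φ(u) = max_{v ∈ V} f(u,v)` is directionally differentiable with
`D_y Φ(u) = ⟪∇_u f(u, v̂(u)), y⟫`. -/
theorem stmt17 {n m : ℕ}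
    (Uset : Set (EuclideanSpace ℝ (Fin n))) (hU : IsOpen Uset)
    (Vset : Set (EuclideanSpace ℝ (Fin m))) (hVc : IsCompact Vset) (hVne : Vset.Nonempty)
    (f : EuclideanSpace ℝ (Fin n) → EuclideanSpace ℝ (Fin m) → ℝ)
    (hf : ContinuousOn (fun p : EuclideanSpace ℝ (Fin n) × EuclideanSpace ℝ (Fin m) =>
      f p.1 p.2) (Uset ×ˢ Vset))
    (G : EuclideanSpace ℝ (Fin n) → EuclideanSpace ℝ (Fin m) → EuclideanSpace ℝ (Fin n))
    (hG : ∀ u ∈ Uset, ∀ v ∈ Vset, HasGradientAt (fun u' => f u' v) (G u v) u)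
    (hGcont : ContinuousOn (fun p : EuclideanSpace ℝ (Fin n) × EuclideanSpace ℝ (Fin m) =>
      G p.1 p.2) (Uset ×ˢ Vset))
    (vhat : EuclideanSpace ℝ (Fin n) → EuclideanSpace ℝ (Fin m))
    (hvhat_mem : ∀ u ∈ Uset, vhat u ∈ Vset)
    (hvhat_max : ∀ u ∈ Uset, ∀ v ∈ Vset, f u v ≤ f u (vhat u))
    (hvhat_unique : ∀ u ∈ Uset, ∀ v ∈ Vset, f u v = f u (vhat u) → v = vhat u)
    (Φ : EuclideanSpace ℝ (Fin n) → ℝ)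
    (hΦ : ∀ u, Φ u = sSup ((fun v => f u v) '' Vset)) :
    ∀ u ∈ Uset, ∀ y : EuclideanSpace ℝ (Fin n),
      Filter.Tendsto (fun t : ℝ => (Φ (u + t • y) - Φ u) / t)
        (𝓝[>] (0 : ℝ)) (𝓝 ⟪G u (vhat u), y⟫) :=
  stmt17_general Uset hU Vset hVc f hf G hG hGcont vhat hvhat_mem hvhat_max hvhat_unique Φ hΦ
end
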